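/- arXiv:1803.06080 — 4 statements merged into one kernel-verified Lean document; each statement's English description precedes it below -/
import Mathlib

section
/- For integers n ≥ 1 and j ≥ 0 define c_{j,n} = (−1)^j t^{(j²−3j)/2} e_j(1, t^{−1}, t^{−2}, …, t^{−(n+j−2)}) ∈ ℚ(t), where e_j denotes the j-th elementary symmetric polynomial of the listed n+j−1 quantities (so e_j of a list with fewer than j entries is 0, and c_{0,n} = 1); set c_{j,0} = 0 for j ≥ 1 and c_{0,0} = 1. Then this family solves the recursion c_{j,n} = c_{j,n−1} − t^{−n} c_{j−1,n} for all j ≥ 1 and n ≥ 1. -/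
noncomputable section

/-- The field `ℚ(t)`. -/
abbrev Ft : Type := RatFunc ℚ

def tt : Ft := RatFunc.X

lemma esymm_cons {R : Type*} [CommSemiring R] (a : R) (s : Multiset R) (k : ℕ) :
    Multiset.esymm (a ::ₘ s) (k + 1) =
      Multiset.esymm s (k + 1) + a * Multiset.esymm s k := by
  simp only [Multiset.esymm, Multiset.powersetCard_cons, Multiset.map_add, Multiset.sum_add,
    Multiset.map_map, Function.comp_def, Multiset.prod_cons, ← Multiset.sum_map_mul_left]

def L (M : ℕ) : Multiset Ft := ((List.range M).map fun i => tt ^ (-(i : ℤ)) : List Ft)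

lemma L_succ (M : ℕ) : L (M + 1) = tt ^ (-(M : ℤ)) ::ₘ L M := by
  simp [L, List.range_succ]

lemma esymm_L_card (k : ℕ) : Multiset.esymm (L k) (k + 1) = 0 := by
  rw [Multiset.esymm, Multiset.powersetCard_eq_empty] <;> simp [L, Function.comp_def]

/-- `c_{j,n} = (-1)^j t^{(j²-3j)/2} e_j(1, t⁻¹, …, t^{-(n+j-2)})` for `n ≥ 1` (a list of
`n+j-1` entries, so that `c_{0,n} = 1`), together with the conventions `c_{0,0} = 1` and
`c_{j,0} = 0` for `j ≥ 1`. -/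
def c (j n : ℕ) : Ft :=
  if n = 0 then (if j = 0 then 1 else 0)
  else
    (-1 : Ft) ^ j * tt ^ (((j : ℤ) ^ 2 - 3 * j) / 2) *
      Multiset.esymm (((List.range (n + j - 1)).map fun i => tt ^ (-(i : ℤ)) : List Ft) :
        Multiset Ft) j

lemma c_eq (k n : ℕ) :
    c (k+1) n = (-1:Ft)^(k+1) * tt ^ (((((k:ℤ))+1)^2 - 3*(((k:ℤ))+1))/2) *
      Multiset.esymm (L (n+k)) (k+1) := by
  rcases n with _|n
  · simp [c, esymm_L_card]
  · have h : n + 1 + (k+1) - 1 = n + 1 + k := by omega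
    simp only [c, if_neg (Nat.succ_ne_zero n), h, L]
    push_cast
    ring_nf

lemma c_eq' (k n : ℕ) :
    c k (n+1) = (-1:Ft)^k * tt ^ ((((k:ℤ))^2 - 3*((k:ℤ)))/2) *
      Multiset.esymm (L (n+k)) k := by
  have h : n + 1 + k - 1 = n + k := by omega
  simp only [c, if_neg (Nat.succ_ne_zero n), h, L]

theorem c_recursion (j n : ℕ) (hj : 1 ≤ j) (hn : 1 ≤ n) :
    c j n = c j (n - 1) - tt ^ (-(n : ℤ)) * c (j - 1) n := by
  obtain ⟨k, rfl⟩ : ∃ k, j = k + 1 := ⟨j - 1, by omega⟩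
  obtain ⟨m, rfl⟩ : ∃ m, n = m + 1 := ⟨n - 1, by omega⟩
  simp only [Nat.add_sub_cancel]
  rw [c_eq k (m+1), c_eq k m, c_eq' k m, show m + 1 + k = (m + k) + 1 from by omega,
    L_succ, esymm_cons]
  have hX : tt ≠ 0 := RatFunc.X_ne_zero
  have hE : ((((k:ℤ))+1)^2 - 3*(((k:ℤ))+1))/2 = (((k:ℤ))^2 - 3*((k:ℤ)))/2 + ((k:ℤ) - 1) := by
    have h1 : (((k:ℤ))+1)^2 - 3*(((k:ℤ))+1) = (((k:ℤ))^2 - 3*((k:ℤ))) + ((k:ℤ) - 1) * 2 := by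
      ring
    rw [h1, Int.add_mul_ediv_right _ _ two_ne_zero]
  rw [hE]
  set A := Multiset.esymm (L (m+k)) (k+1)
  set B := Multiset.esymm (L (m+k)) k
  set e := (((k:ℤ))^2 - 3*((k:ℤ)))/2
  push_cast
  rw [pow_succ]
  simp only [zpow_add₀ hX, zpow_sub₀ hX, zpow_neg, zpow_one]
  field_simp
  ring
end
end

section
/- For integers 0 ≤ j ≤ n, the elementary symmetric polynomial of the geometric progression 1, q, q², …, q^{n−1} satisfies e_j(1, q, …, q^{n−1}) = q^{j(j−1)/2} · ∏_{i=1}^{j} (1 − q^{n−i+1})/(1 − q^{i}) in the field ℚ(q). -/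
/-!
Splitting off the largest term `q ^ n` gives the `q`-Pascal recursion
`e_{k+1}(1, …, q^n) = e_{k+1}(1, …, q^{n-1}) + q^n e_k(1, …, q^{n-1})`.
With the denominators cleared, the formula becomes an identity in any commutative ring, which
follows from this recursion by induction on `n`; in `ℚ(q)` the denominators `1 - q^i` are nonzero
because `q` is not a root of unity.
-/

noncomputable section

/-- The field `ℚ(q)`. -/
abbrev Fq : Type := RatFunc ℚ

def qv : Fq := RatFunc.X

open Finset

theorem Multiset.esymm_cons_succ {R : Type*} [CommSemiring R] (a : R) (s : Multiset R) (k : ℕ) :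
    (a ::ₘ s).esymm (k + 1) = s.esymm (k + 1) + a * s.esymm k := by
  simp only [Multiset.esymm, Multiset.powersetCard_cons, Multiset.map_add, Multiset.sum_add,
    Multiset.map_map, Function.comp_def, Multiset.prod_cons, Multiset.sum_map_mul_left]

section GeometricProgression

variable {R : Type*} [CommRing R] (q : R)

theorem esymm_map_pow_range_succ (n k : ℕ) :
    ((Multiset.range (n + 1)).map (q ^ ·)).esymm (k + 1) =
      ((Multiset.range n).map (q ^ ·)).esymm (k + 1) +
        q ^ n * ((Multiset.range n).map (q ^ ·)).esymm k := by
  rw [Multiset.range_succ, Multiset.map_cons, Multiset.esymm_cons_succ]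

/-- For `k > n` the product contains the factor `1 - q ^ 0 = 0`. -/
theorem prod_one_sub_pow_sub_mul_pow_add_sub (n k : ℕ) :
    (∏ i ∈ range k, (1 - q ^ (n - i))) * q ^ (k + (n - k)) =
      (∏ i ∈ range k, (1 - q ^ (n - i))) * q ^ n := by
  rcases le_or_gt k n with hkn | hnk
  · rw [Nat.add_sub_cancel' hkn]
  · rw [prod_eq_zero (mem_range.2 hnk) (by simp), zero_mul, zero_mul]

theorem esymm_map_pow_range_mul_prod (n j : ℕ) :
    ((Multiset.range n).map (q ^ ·)).esymm j * ∏ i ∈ range j, (1 - q ^ (i + 1)) =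
      q ^ j.choose 2 * ∏ i ∈ range j, (1 - q ^ (n - i)) := by
  induction n generalizing j with
  | zero =>
    cases j with
    | zero => simp [Multiset.esymm]
    | succ k => simp [Multiset.esymm, Multiset.powersetCard_zero_right]
  | succ n ih =>
    cases j with
    | zero => simp [Multiset.esymm]
    | succ k =>
      have hchoose : (k + 1).choose 2 = k.choose 2 + k := by
        rw [Nat.choose_succ_succ', Nat.choose_one_right, add_comm]
      have hnum : ∏ i ∈ range (k + 1), (1 - q ^ (n + 1 - i)) =
          (∏ i ∈ range k, (1 - q ^ (n - i))) * (1 - q ^ (n + 1)) := by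
        simp [prod_range_succ']
      have ih_succ := ih (k + 1)
      rw [prod_range_succ, prod_range_succ, hchoose, pow_add] at ih_succ
      rw [esymm_map_pow_range_succ, hnum, hchoose, pow_add, prod_range_succ]
      linear_combination ih_succ + q ^ n * (1 - q ^ (k + 1)) * ih k
        - q ^ k.choose 2 * prod_one_sub_pow_sub_mul_pow_add_sub q n k

theorem esymm_map_pow_range_eq_prod_div {K : Type*} [Field K] (q : K)
    (hq : ∀ m : ℕ, q ^ (m + 1) ≠ 1) (n j : ℕ) :
    ((Multiset.range n).map (q ^ ·)).esymm j =
      q ^ j.choose 2 * ∏ i ∈ range j, (1 - q ^ (n - i)) / (1 - q ^ (i + 1)) := by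
  have hden : ∏ i ∈ range j, (1 - q ^ (i + 1)) ≠ 0 :=
    prod_ne_zero_iff.2 fun i _ => sub_ne_zero.2 (hq i).symm
  rw [prod_div_distrib, mul_div_assoc', eq_div_iff hden]
  exact esymm_map_pow_range_mul_prod q n j

end GeometricProgression

theorem qv_pow_succ_ne_one (m : ℕ) : qv ^ (m + 1) ≠ 1 := by
  rw [← sub_ne_zero]
  have hX : qv ^ (m + 1) - 1 =
      algebraMap (Polynomial ℚ) Fq (Polynomial.X ^ (m + 1) - Polynomial.C 1) := by
    simp [qv, RatFunc.algebraMap_X]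
  rw [hX]
  exact RatFunc.algebraMap_ne_zero (Polynomial.X_pow_sub_C_ne_zero m.succ_pos 1)

theorem esymm_geometric_general (n j : ℕ) :
    Multiset.esymm (((List.range n).map fun i => qv ^ i : List Fq) : Multiset Fq) j =
      qv ^ (j * (j - 1) / 2) * ∏ i ∈ Finset.range j, (1 - qv ^ (n - i)) / (1 - qv ^ (i + 1)) := by
  rw [← Nat.choose_two_right]
  exact esymm_map_pow_range_eq_prod_div qv qv_pow_succ_ne_one n j

/-- Gauss's evaluation of the elementary symmetric polynomial of the geometric progression
`1, q, q², …, q^{n-1}`: for `0 ≤ j ≤ n`,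
`e_j(1, q, …, q^{n-1}) = q^{j(j-1)/2} ∏_{i=1}^{j} (1 - q^{n-i+1})/(1 - q^i)`. -/
theorem esymm_geometric (n j : ℕ) (hj : j ≤ n) :
    Multiset.esymm (((List.range n).map fun i => qv ^ i : List Fq) : Multiset Fq) j =
      qv ^ (j * (j - 1) / 2) * ∏ i ∈ Finset.range j, (1 - qv ^ (n - i)) / (1 - qv ^ (i + 1)) :=
  esymm_geometric_general n j
end
end

section
/- For every n ≥ 1, in the field ℚ(t, x₁, …, x_n) one has ∑_{i=1}^{n} ∏_{j≠i} (t x_j − x_i)/(x_j − x_i) = (1 − t^n)/(1 − t). -/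
/-! With `P(y) = ∏ⱼ (y - t xⱼ) - ∏ⱼ (y - xⱼ)`, a polynomial of degree `< n`, Lagrange
interpolation at the nodes `xᵢ` evaluated at `y = 0` reads
`(tⁿ - 1) ∏ⱼ (-xⱼ) = ∑ᵢ P(xᵢ) ∏_{j ≠ i} (-xⱼ) / (xᵢ - xⱼ)`.
Since `P(xᵢ) = (1 - t) xᵢ ∏_{j ≠ i} (xᵢ - t xⱼ)`, the `i`-th summand on the right is
`-(1 - t) ∏ⱼ (-xⱼ)` times the `i`-th summand of the identity, and `∏ⱼ (-xⱼ)` cancels. -/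

noncomputable section

/-- The field `ℚ(t, x₁, …, x_n)`: `t` is the variable `none` and `x_i` the variable `some i`. -/
abbrev K (n : ℕ) : Type := FractionRing (MvPolynomial (Option (Fin n)) ℚ)

def tv (n : ℕ) : K n := algebraMap (MvPolynomial (Option (Fin n)) ℚ) (K n) (MvPolynomial.X none)

def xv (n : ℕ) (i : Fin n) : K n :=
  algebraMap (MvPolynomial (Option (Fin n)) ℚ) (K n) (MvPolynomial.X (some i))

open Finset Polynomial

namespace Lagrange

variable {F ι : Type*} [Field F] [DecidableEq ι] {s : Finset ι} {v : ι → F}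

theorem eval_eq_sum_mul_prod_div (hvs : Set.InjOn v s) {f : F[X]} (hf : f.degree < #s) (y : F) :
    f.eval y = ∑ i ∈ s, f.eval (v i) * ∏ j ∈ s.erase i, (y - v j) / (v i - v j) := by
  conv_lhs => rw [eq_interpolate hvs hf]
  simp only [interpolate_apply, eval_finsetSum, eval_mul, eval_C, Lagrange.basis, basisDivisor,
    eval_prod, eval_sub, eval_X, div_eq_inv_mul]

end Lagrange

section

variable {F ι : Type*} [Field F] [DecidableEq ι] {s : Finset ι} {v : ι → F}

open Lagrange

theorem prod_sub_mul_mul_prod_zero_sub_div (t : F) {i : ι} (hi : i ∈ s) :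
    (∏ j ∈ s, (v i - t * v j)) * ∏ j ∈ s.erase i, (0 - v j) / (v i - v j) =
      -((1 - t) * (∏ j ∈ s, -v j) * ∏ j ∈ s.erase i, (t * v j - v i) / (v j - v i)) := by
  have hfactor : ∀ j, (v i - t * v j) * ((0 - v j) / (v i - v j)) =
      -v j * ((t * v j - v i) / (v j - v i)) := fun j => by
    rw [← neg_div_neg_eq (t * v j - v i)]
    ring
  rw [← mul_prod_erase s _ hi, ← mul_prod_erase s (fun j => -v j) hi, mul_assoc,
    ← prod_mul_distrib, prod_congr rfl fun j _ => hfactor j, prod_mul_distrib]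
  ring

theorem one_sub_mul_sum_prod_div_eq_one_sub_pow (hvs : Set.InjOn v s) (hv : ∀ i ∈ s, v i ≠ 0)
    (t : F) :
    (1 - t) * ∑ i ∈ s, ∏ j ∈ s.erase i, (t * v j - v i) / (v j - v i) = 1 - t ^ #s := by
  set P := nodal s (fun j => t * v j) - nodal s v
  have hP : P.degree < #s := by
    have := degree_sub_lt_left (p := nodal s fun j => t * v j) (q := nodal s v)
      (by rw [degree_nodal, degree_nodal]) nodal_ne_zero
      (by rw [nodal_monic.leadingCoeff, nodal_monic.leadingCoeff])
    rwa [degree_nodal] at this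
  have hQ : ∏ j ∈ s, -v j ≠ 0 := prod_ne_zero_iff.2 fun j hj => neg_ne_zero.2 (hv j hj)
  have heval := eval_eq_sum_mul_prod_div hvs hP 0
  have hnode : ∀ i ∈ s, P.eval (v i) = ∏ j ∈ s, (v i - t * v j) := fun i hi => by
    simp only [P, eval_sub, eval_nodal_at_node hi, sub_zero, eval_nodal]
  have hzero : P.eval 0 = (t ^ #s - 1) * ∏ j ∈ s, -v j := by
    simp only [P, eval_sub, eval_nodal, zero_sub, neg_mul_eq_mul_neg, prod_mul_distrib,
      prod_const]
    ring
  rw [hzero, sum_congr rfl fun i hi => by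
    rw [hnode i hi, prod_sub_mul_mul_prod_zero_sub_div t hi], sum_neg_distrib, ← mul_sum] at heval
  apply mul_right_cancel₀ hQ
  linear_combination heval

end

section

variable (n : ℕ)

theorem algebraMap_injective_K :
    Function.Injective (algebraMap (MvPolynomial (Option (Fin n)) ℚ) (K n)) :=
  IsFractionRing.injective _ _

theorem xv_injective : Function.Injective (xv n) := fun _ _ h =>
  Option.some_injective _ (MvPolynomial.X_injective (algebraMap_injective_K n h))

theorem xv_ne_zero (i : Fin n) : xv n i ≠ 0 :=
  (map_ne_zero_iff _ (algebraMap_injective_K n)).2 (MvPolynomial.X_ne_zero _)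

theorem tv_ne_one : tv n ≠ 1 := fun h => by
  have hX := algebraMap_injective_K n (h.trans (map_one _).symm)
  simpa using congrArg MvPolynomial.constantCoeff hX

end

theorem sum_prod_identity_general (n : ℕ) :
    ∑ i : Fin n, ∏ j ∈ Finset.univ.erase i, (tv n * xv n j - xv n i) / (xv n j - xv n i) =
      (1 - tv n ^ n) / (1 - tv n) := by
  rw [eq_div_iff (sub_ne_zero.2 (tv_ne_one n).symm), mul_comm]
  simpa using one_sub_mul_sum_prod_div_eq_one_sub_pow (s := univ) (xv_injective n).injOn
    (fun i _ => xv_ne_zero n i) (tv n)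

theorem sum_prod_identity (n : ℕ) (hn : 1 ≤ n) :
    ∑ i : Fin n, ∏ j ∈ Finset.univ.erase i, (tv n * xv n j - xv n i) / (xv n j - xv n i) =
      (1 - tv n ^ n) / (1 - tv n) :=
  sum_prod_identity_general n
end
end

section
/- Let A = ℚ[a₁, a₂, …] be the polynomial ring in countably many variables, R = A[[q]], and consider in R[[z]] the series F_n(z) = 1 + ∑_{r≥1} a_r q^{nr} z^r for n ≥ 0. Then the infinite product ∏_{n≥0} F_n(z) converges coefficientwise (for each m, the coefficients of z^m of the partial products converge in the q-adic topology of R) to a series ∑_{m≥0} b_m z^m whose coefficients satisfy b₀ = 1 and (1 − q^m) b_m = ∑_{r=1}^{m} q^{m−r} a_r b_{m−r} for every m ≥ 1; since 1 − q^m is invertible in R, this recursion determines the b_m uniquely. Moreover each b_m is weighted homogeneous of degree m in the variables a_r when a_r is assigned degree r. -/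
/-!
Write `P_N = ∏_{n ≤ N} F_n`. Since `F_{N+1} ≡ 1` modulo `q^{N+1}`, the coefficients of `P_N` are
eventually constant modulo every power of `q`, which defines the limit `Φ = ∏_n F_n`. From
`F_{n+1}(z) = F_n(qz)` we get `P_{N+1}(z) = F_0(z) P_N(qz)`; reduction of the `q`-coefficients modulo
`q^k` is a ring homomorphism commuting with `z ↦ qz`, so this passes to the limit as the functional
equation `Φ(z) = F_0(z) Φ(qz)`, whose `z^m`-coefficient is the recursion. Homogeneity holds for
each `F_n` and is preserved by products.
-/

open PowerSeries

noncomputable section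

/-- `A = ℚ[a₁, a₂, …]`: the variable `a_r` (for `r ≥ 1`) is `MvPolynomial.X (r-1)`. -/
abbrev A : Type := MvPolynomial ℕ ℚ

/-- `R = A[[q]]`. -/
abbrev R : Type := PowerSeries A

/-- `a_r = X (r-1) ∈ A`, of weighted degree `r` for the weight `i ↦ i + 1`. -/
def a (r : ℕ) : A := MvPolynomial.X (r - 1)

/-- `F_n(z) = 1 + ∑_{r≥1} a_r q^{nr} z^r ∈ R[[z]]`. -/
def Fser (n : ℕ) : PowerSeries R :=
  PowerSeries.mk fun r =>
    if r = 0 then 1 else PowerSeries.C (R := A) (a r) * (PowerSeries.X : R) ^ (n * r)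

open Finset

namespace PowerSeries

section Reduction

variable {S : Type*} [CommRing S]

def reduceModXPow (k : ℕ) : S⟦X⟧⟦X⟧ →+* (S⟦X⟧ ⧸ Ideal.span {(X : S⟦X⟧) ^ k})⟦X⟧ :=
  map (Ideal.Quotient.mk _)

theorem reduceModXPow_eq_iff {k : ℕ} {f g : S⟦X⟧⟦X⟧} :
    reduceModXPow k f = reduceModXPow k g ↔
      ∀ m, ∀ i < k, coeff i (coeff m f) = coeff i (coeff m g) := by
  simp only [reduceModXPow, PowerSeries.ext_iff, coeff_map, Ideal.Quotient.eq,
    Ideal.mem_span_singleton, X_pow_dvd_iff, map_sub, sub_eq_zero]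

theorem eq_of_forall_reduceModXPow_eq {f g : S⟦X⟧⟦X⟧}
    (h : ∀ k, reduceModXPow k f = reduceModXPow k g) : f = g := by
  ext m i : 2
  exact reduceModXPow_eq_iff.1 (h (i + 1)) m i i.lt_succ_self

theorem reduceModXPow_rescale_X (k : ℕ) (f : S⟦X⟧⟦X⟧) :
    reduceModXPow k (rescale X f) = rescale (Ideal.Quotient.mk _ X) (reduceModXPow k f) :=
  (rescale_map _ _ _).symm

end Reduction

theorem isUnit_one_sub_X_pow {S : Type*} [Ring S] {m : ℕ} (hm : 1 ≤ m) :
    IsUnit (1 - X ^ m : S⟦X⟧) := by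
  simp [isUnit_iff_constantCoeff, zero_pow (Nat.one_le_iff_ne_zero.1 hm)]

theorem coeff_mul_eq_add_sum_Icc {S : Type*} [CommSemiring S] (f g : S⟦X⟧) (m : ℕ) :
    coeff m (f * g) = coeff 0 f * coeff m g + ∑ r ∈ Icc 1 m, coeff r f * coeff (m - r) g := by
  rw [coeff_mul, Nat.sum_antidiagonal_eq_sum_range_succ_mk, range_eq_Ico,
    sum_eq_sum_Ico_succ_bot m.succ_pos, zero_add, Nat.succ_eq_add_one, Ico_add_one_right_eq_Icc]
  rfl

section WeightedHomogeneous

variable {σ S : Type*} [CommSemiring S] (w : σ → ℕ)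

/-- The series in `z` whose coefficient of `z ^ m q ^ k` is weighted homogeneous of degree `m`. -/
def weightedHomogeneousSeries : Submonoid (MvPolynomial σ S)⟦X⟧⟦X⟧ where
  carrier := {f | ∀ m k, (coeff k (coeff m f)).IsWeightedHomogeneous w m}
  one_mem' m k := by
    rw [coeff_one]
    split_ifs with hm
    · rw [hm, coeff_one]
      split_ifs
      exacts [MvPolynomial.isWeightedHomogeneous_one S w,
        MvPolynomial.isWeightedHomogeneous_zero S w 0]
    · simpa using MvPolynomial.isWeightedHomogeneous_zero S w m
  mul_mem' {f g} hf hg m k := by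
    simp only [coeff_mul, map_sum, ← MvPolynomial.mem_weightedHomogeneousSubmodule]
    refine sum_mem fun p hp => sum_mem fun q _ => ?_
    rw [MvPolynomial.mem_weightedHomogeneousSubmodule, ← mem_antidiagonal.1 hp]
    exact (hf _ _).mul (hg _ _)

end WeightedHomogeneous

end PowerSeries

theorem eq_of_isLeftRegular_mul_eq_sum {T : Type*} [CommSemiring T] {u : ℕ → T}
    (hu : ∀ m, 1 ≤ m → IsLeftRegular (u m)) (c : ℕ → ℕ → T) {b b' : ℕ → T} (h0 : b 0 = b' 0)
    (hb : ∀ m, 1 ≤ m → u m * b m = ∑ r ∈ Icc 1 m, c m r * b (m - r))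
    (hb' : ∀ m, 1 ≤ m → u m * b' m = ∑ r ∈ Icc 1 m, c m r * b' (m - r)) : b = b' := by
  funext m
  induction m using Nat.strong_induction_on with
  | _ m ih =>
    rcases Nat.eq_zero_or_pos m with rfl | hm
    · exact h0
    · refine hu m hm (?_ : u m * b m = u m * b' m)
      rw [hb m hm, hb' m hm]
      refine sum_congr rfl fun r hr => ?_
      rw [ih (m - r) (by grind)]

theorem isWeightedHomogeneous_a {r : ℕ} (hr : 1 ≤ r) :
    (a r).IsWeightedHomogeneous (fun i => i + 1) r := by
  have h := MvPolynomial.isWeightedHomogeneous_X ℚ (fun i => i + 1) (r - 1)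
  rwa [Nat.sub_add_cancel hr] at h

namespace Fser

theorem mem_weightedHomogeneousSeries (n : ℕ) :
    Fser n ∈ weightedHomogeneousSeries (fun i => i + 1) := by
  intro m k
  rcases Nat.eq_zero_or_pos m with rfl | hm
  · simpa [Fser] using (weightedHomogeneousSeries (σ := ℕ) (S := ℚ) (fun i => i + 1)).one_mem 0 k
  · simp only [Fser, coeff_mk, if_neg hm.ne', coeff_C_mul_X_pow]
    split_ifs
    exacts [isWeightedHomogeneous_a hm, MvPolynomial.isWeightedHomogeneous_zero ℚ _ m]

theorem succ_eq_rescale (n : ℕ) : Fser (n + 1) = rescale X (Fser n) := by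
  ext r : 1
  rcases eq_or_ne r 0 with rfl | hr
  · simp [Fser]
  · simp only [Fser, coeff_rescale, coeff_mk, if_neg hr]
    ring

theorem reduceModXPow_eq_one {k n : ℕ} (hkn : k ≤ n) : reduceModXPow k (Fser n) = 1 := by
  rw [← map_one (reduceModXPow (S := A) k), reduceModXPow_eq_iff]
  intro m i hi
  rcases Nat.eq_zero_or_pos m with rfl | hm
  · simp [Fser]
  · have : i ≠ n * m := by nlinarith
    simp [Fser, hm.ne', coeff_one, this]

def partialProd (N : ℕ) : R⟦X⟧ := ∏ n ∈ range (N + 1), Fser n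

theorem partialProd_succ (N : ℕ) : partialProd (N + 1) = Fser 0 * rescale X (partialProd N) := by
  simp only [partialProd, prod_range_succ' _ (N + 1), succ_eq_rescale, map_prod, mul_comm]

theorem reduceModXPow_partialProd {k M N : ℕ} (hk : k ≤ M + 1) (hMN : M ≤ N) :
    reduceModXPow k (partialProd N) = reduceModXPow k (partialProd M) := by
  induction N, hMN using Nat.le_induction with
  | base => rfl
  | succ N hMN ih =>
    rw [partialProd, prod_range_succ, map_mul, reduceModXPow_eq_one (by omega), mul_one]
    exact ih

def infiniteProd : R⟦X⟧ := mk fun m => mk fun k => coeff k (coeff m (partialProd k))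

theorem coeff_coeff_partialProd_of_le {k N : ℕ} (hkN : k ≤ N) (m : ℕ) :
    coeff k (coeff m (partialProd N)) = coeff k (coeff m infiniteProd) := by
  rw [infiniteProd, coeff_mk, coeff_mk]
  exact reduceModXPow_eq_iff.1 (reduceModXPow_partialProd le_rfl hkN) m k k.lt_succ_self

theorem reduceModXPow_infiniteProd {k N : ℕ} (hk : k ≤ N + 1) :
    reduceModXPow k infiniteProd = reduceModXPow k (partialProd N) :=
  reduceModXPow_eq_iff.2 fun m i hi => (coeff_coeff_partialProd_of_le (by omega) m).symm

theorem infiniteProd_eq_mul_rescale : infiniteProd = Fser 0 * rescale X infiniteProd := by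
  refine eq_of_forall_reduceModXPow_eq fun k => ?_
  calc reduceModXPow k infiniteProd
      = reduceModXPow k (Fser 0 * rescale X (partialProd k)) := by
        rw [reduceModXPow_infiniteProd (N := k + 1) (by omega), partialProd_succ]
    _ = reduceModXPow k (Fser 0 * rescale X infiniteProd) := by
        rw [map_mul, map_mul, reduceModXPow_rescale_X, reduceModXPow_rescale_X,
          reduceModXPow_infiniteProd (N := k) (by omega)]

theorem coeff_zero_mul (f : R⟦X⟧) (m : ℕ) :
    coeff m (Fser 0 * f) = coeff m f + ∑ r ∈ Icc 1 m, C (a r) * coeff (m - r) f := by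
  rw [coeff_mul_eq_add_sum_Icc, show coeff 0 (Fser 0) = 1 by simp [Fser], one_mul]
  refine congrArg _ (sum_congr rfl fun r hr => ?_)
  simp [Fser, Nat.one_le_iff_ne_zero.1 (mem_Icc.1 hr).1]

theorem one_sub_X_pow_mul_coeff_infiniteProd (m : ℕ) :
    (1 - X ^ m) * coeff m infiniteProd =
      ∑ r ∈ Icc 1 m, X ^ (m - r) * C (a r) * coeff (m - r) infiniteProd := by
  have h := congrArg (coeff m) infiniteProd_eq_mul_rescale
  simp only [coeff_zero_mul, coeff_rescale] at h
  rw [sub_mul, one_mul, sub_eq_iff_eq_add']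
  conv_lhs => rw [h]
  exact congrArg _ (sum_congr rfl fun r _ => by ring)

theorem coeff_zero_infiniteProd : coeff 0 infiniteProd = 1 := by
  ext k : 1
  rw [infiniteProd, coeff_mk, coeff_mk, partialProd, coeff_zero_eq_constantCoeff_apply, map_prod,
    prod_eq_one fun n _ => by simp [Fser, ← coeff_zero_eq_constantCoeff_apply]]

theorem infiniteProd_mem_weightedHomogeneousSeries :
    infiniteProd ∈ weightedHomogeneousSeries (fun i => i + 1) :=
  fun m k => by
    rw [← coeff_coeff_partialProd_of_le le_rfl]
    exact (prod_mem fun n _ => mem_weightedHomogeneousSeries n : partialProd k ∈ _) m k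

end Fser

theorem infinite_product_recursion :
    ∃ b : ℕ → R,
      -- coefficientwise convergence of the partial products `∏_{n=0}^{N} F_n(z)` to `∑ b_m z^m`
      (∀ m k : ℕ, ∃ N₀ : ℕ, ∀ N : ℕ, N₀ ≤ N →
        PowerSeries.coeff (R := A) k
            (PowerSeries.coeff (R := R) m (∏ n ∈ Finset.range (N + 1), Fser n)) =
          PowerSeries.coeff (R := A) k (b m)) ∧
      b 0 = 1 ∧
      -- the recursion `(1 - q^m) b_m = ∑_{r=1}^{m} q^{m-r} a_r b_{m-r}`
      (∀ m : ℕ, 1 ≤ m →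
        (1 - (PowerSeries.X : R) ^ m) * b m =
          ∑ r ∈ Finset.Icc 1 m,
            (PowerSeries.X : R) ^ (m - r) * PowerSeries.C (R := A) (a r) * b (m - r)) ∧
      -- `1 - q^m` is invertible in `R`
      (∀ m : ℕ, 1 ≤ m → IsUnit (1 - (PowerSeries.X : R) ^ m)) ∧
      -- hence the recursion determines the `b_m` uniquely
      (∀ b' : ℕ → R, b' 0 = 1 →
        (∀ m : ℕ, 1 ≤ m →
          (1 - (PowerSeries.X : R) ^ m) * b' m =
            ∑ r ∈ Finset.Icc 1 m,
              (PowerSeries.X : R) ^ (m - r) * PowerSeries.C (R := A) (a r) * b' (m - r)) →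
        b' = b) ∧
      -- each `b_m` is weighted homogeneous of degree `m` when `a_r` has degree `r`
      (∀ m k : ℕ,
        MvPolynomial.IsWeightedHomogeneous (fun i => i + 1)
          (PowerSeries.coeff (R := A) k (b m)) m) := by
  refine ⟨fun m => coeff m Fser.infiniteProd,
    fun m k => ⟨k, fun N hN => Fser.coeff_coeff_partialProd_of_le hN m⟩,
    Fser.coeff_zero_infiniteProd, fun m _ => Fser.one_sub_X_pow_mul_coeff_infiniteProd m,
    fun m hm => isUnit_one_sub_X_pow hm, fun b' hb'0 hb' => ?_,
    Fser.infiniteProd_mem_weightedHomogeneousSeries⟩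
  exact eq_of_isLeftRegular_mul_eq_sum (fun m hm => (isUnit_one_sub_X_pow hm).isRegular.left)
    (fun m r => X ^ (m - r) * C (a r)) (hb'0.trans Fser.coeff_zero_infiniteProd.symm) hb'
    fun m _ => Fser.one_sub_X_pow_mul_coeff_infiniteProd m
end
end
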